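/- arXiv:math/0701703 — 2 statements merged into one kernel-verified Lean document; each statement's English description precedes it below -/
import Mathlib

section
/- Let G be a finite group and let a = (a_0, …, a_{m−1}) ∈ G^m have associated nested subgroups A_0 = ⊥, A_{i+1} = ⟨A_i, a_i⟩. Then the number of m-tuples b ∈ G^m that are orbit-equivalent to a equals the product ∏_{i=0}^{m−1} λ(A_i, A_{i+1}). -/
/-- The nested subgroups associated to an `m`-tuple `a`:
`A 0 = ⊥` and `A (i+1) = ⟨A i, a i⟩`. -/
def nestedSubgroup {G : Type*} [Group G] {m : ℕ} (a : Fin m → G) : ℕ → Subgroup G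
  | 0 => ⊥
  | i + 1 =>
      if h : i < m then nestedSubgroup a i ⊔ Subgroup.closure {a ⟨i, h⟩}
      else nestedSubgroup a i

/-- `A` lies in the orbit of `B` under the natural action of `Aut G` on subgroups. -/
def inAutOrbit {G : Type*} [Group G] (A B : Subgroup G) : Prop :=
  ∃ φ : MulAut G, Subgroup.map φ.toMonoidHom B = A

/-- `λ(A, B)`: the number of `x ∈ G` with `⟨A, x⟩` in the `Aut G`-orbit of `B`. -/
noncomputable def lambdaConst {G : Type*} [Group G] (A B : Subgroup G) : ℕ :=
  Nat.card {x : G // inAutOrbit (A ⊔ Subgroup.closure {x}) B}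

/-- Two `m`-tuples are orbit-equivalent if their nested subgroups are in the same
`Aut G`-orbits. -/
def orbitEquiv {G : Type*} [Group G] {m : ℕ} (a b : Fin m → G) : Prop :=
  ∀ i ≤ m, inAutOrbit (nestedSubgroup a i) (nestedSubgroup b i)

section Aux
variable {G : Type*} [Group G]

lemma inAutOrbit_refl (A : Subgroup G) : inAutOrbit A A :=
  ⟨1, by ext x; simp [Subgroup.mem_map]⟩

lemma inAutOrbit_trans {A B C : Subgroup G} (h1 : inAutOrbit A B) (h2 : inAutOrbit B C) :
    inAutOrbit A C := by
  obtain ⟨φ, hφ⟩ := h1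
  obtain ⟨ψ, hψ⟩ := h2
  exact ⟨φ * ψ, by rw [← hφ, ← hψ, Subgroup.map_map]; rfl⟩

lemma inAutOrbit_symm {A B : Subgroup G} (h : inAutOrbit A B) : inAutOrbit B A := by
  obtain ⟨φ, hφ⟩ := h
  refine ⟨φ⁻¹, ?_⟩
  rw [← hφ, Subgroup.map_map]
  ext x
  simp [Subgroup.mem_map]

lemma inAutOrbit_map_left (φ : MulAut G) (S B : Subgroup G) :
    inAutOrbit (Subgroup.map φ.toMonoidHom S) B ↔ inAutOrbit S B := by
  have h0 : inAutOrbit (Subgroup.map φ.toMonoidHom S) S := ⟨φ, rfl⟩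
  exact ⟨fun h => inAutOrbit_trans (inAutOrbit_symm h0) h, fun h => inAutOrbit_trans h0 h⟩

lemma lambdaConst_congr {A A' B : Subgroup G} (h : inAutOrbit A A') :
    lambdaConst A B = lambdaConst A' B := by
  obtain ⟨φ, hφ⟩ := h
  symm
  refine Nat.card_congr (Equiv.subtypeEquiv φ.toEquiv fun x => ?_)
  have key : A ⊔ Subgroup.closure {φ.toEquiv x} =
      Subgroup.map φ.toMonoidHom (A' ⊔ Subgroup.closure {x}) := by
    rw [Subgroup.map_sup, hφ, MonoidHom.map_closure, Set.image_singleton]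
    rfl
  rw [key, inAutOrbit_map_left]

end Aux

section Nested
variable {G : Type*} [Group G] {m : ℕ}

lemma nestedSubgroup_init (b : Fin (m + 1) → G) (i : ℕ) :
    i ≤ m → nestedSubgroup (Fin.init b) i = nestedSubgroup b i := by
  induction i with
  | zero => intro _; rfl
  | succ i ih =>
    intro h
    have h1 : i < m := h
    simp only [nestedSubgroup]
    rw [dif_pos h1, dif_pos (h1.trans (Nat.lt_succ_self m)), ih h1.le]
    rfl

lemma nestedSubgroup_succ_top (b : Fin (m + 1) → G) :
    nestedSubgroup b (m + 1) =
      nestedSubgroup (Fin.init b) m ⊔ Subgroup.closure {b (Fin.last m)} := by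
  simp only [nestedSubgroup]
  rw [dif_pos (Nat.lt_succ_self m), nestedSubgroup_init b m le_rfl]
  rfl

lemma orbitEquiv_succ_iff (a b : Fin (m + 1) → G) :
    orbitEquiv b a ↔ orbitEquiv (Fin.init b) (Fin.init a) ∧
      inAutOrbit (nestedSubgroup b (m + 1)) (nestedSubgroup a (m + 1)) := by
  constructor
  · intro h
    refine ⟨fun i hi => ?_, h (m + 1) le_rfl⟩
    rw [nestedSubgroup_init b i hi, nestedSubgroup_init a i hi]
    exact h i (hi.trans (Nat.le_succ m))
  · rintro ⟨h1, h2⟩ i hi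
    rcases Nat.lt_succ_iff_lt_or_eq.mp (Nat.lt_succ_of_le hi) with hlt | heq
    · have him : i ≤ m := Nat.lt_succ_iff.mp hlt
      rw [← nestedSubgroup_init b i him, ← nestedSubgroup_init a i him]
      exact h1 i him
    · subst heq; exact h2

end Nested


/-- The number of `m`-tuples orbit-equivalent to `a` equals
`∏_{i=0}^{m-1} λ(A_i, A_{i+1})`. -/
theorem card_orbitEquiv_class {G : Type*} [Group G] [Fintype G] {m : ℕ}
    (a : Fin m → G) :
    Nat.card {b : Fin m → G // orbitEquiv b a} =
      ∏ i ∈ Finset.range m, lambdaConst (nestedSubgroup a i) (nestedSubgroup a (i + 1)) := by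
  classical
  induction m with
  | zero =>
    have hall : ∀ b : Fin 0 → G, orbitEquiv b a := by
      intro b i hi
      have : i = 0 := Nat.le_zero.mp hi
      subst this
      exact inAutOrbit_refl _
    rw [Nat.card_congr (Equiv.subtypeUnivEquiv hall)]
    simp
  | succ m ih =>
    -- the projection to initial segments
    set f : {b : Fin (m + 1) → G // orbitEquiv b a} →
        {b' : Fin m → G // orbitEquiv b' (Fin.init a)} :=
      fun b => ⟨Fin.init b.1, ((orbitEquiv_succ_iff a b.1).mp b.2).1⟩ with hf
    have hfiber : ∀ y : {b' : Fin m → G // orbitEquiv b' (Fin.init a)},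
        Nat.card {x // f x = y} =
          lambdaConst (nestedSubgroup a m) (nestedSubgroup a (m + 1)) := by
      intro y
      have e : {x // f x = y} ≃
          {g : G // inAutOrbit (nestedSubgroup y.1 m ⊔ Subgroup.closure {g})
            (nestedSubgroup a (m + 1))} :=
        { toFun := fun b => ⟨b.1.1 (Fin.last m), by
            have h2 := ((orbitEquiv_succ_iff a b.1.1).mp b.1.2).2
            have hinit : Fin.init b.1.1 = y.1 := congrArg Subtype.val b.2
            rw [nestedSubgroup_succ_top, hinit] at h2
            exact h2⟩
          invFun := fun g => ⟨⟨Fin.snoc y.1 g.1, (orbitEquiv_succ_iff a _).mpr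
            ⟨by rw [Fin.init_snoc]; exact y.2,
             by rw [nestedSubgroup_succ_top, Fin.init_snoc, Fin.snoc_last]; exact g.2⟩⟩,
            Subtype.ext (by simp [hf])⟩
          left_inv := fun b => by
            apply Subtype.ext
            apply Subtype.ext
            have hinit : Fin.init b.1.1 = y.1 := congrArg Subtype.val b.2
            show Fin.snoc y.1 (b.1.1 (Fin.last m)) = b.1.1
            rw [← hinit, Fin.snoc_init_self]
          right_inv := fun g => Subtype.ext (by simp) }
      rw [Nat.card_congr e]
      have hy : inAutOrbit (nestedSubgroup y.1 m) (nestedSubgroup a m) := by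
        have := y.2 m le_rfl
        rwa [nestedSubgroup_init a m le_rfl] at this
      exact lambdaConst_congr hy
    rw [Nat.card_congr (Equiv.sigmaFiberEquiv f).symm]
    rw [Nat.card_eq_fintype_card, Fintype.card_sigma]
    have : ∀ y, Fintype.card {x // f x = y} =
        lambdaConst (nestedSubgroup a m) (nestedSubgroup a (m + 1)) := by
      intro y; rw [← Nat.card_eq_fintype_card]; exact hfiber y
    rw [Finset.sum_congr rfl fun y _ => this y, Finset.sum_const, smul_eq_mul,
      Finset.card_univ, ← Nat.card_eq_fintype_card, ih (Fin.init a), Finset.prod_range_succ]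
    congr 1
    refine Finset.prod_congr rfl fun i hi => ?_
    have hi' : i < m := Finset.mem_range.mp hi
    rw [nestedSubgroup_init a i hi'.le, nestedSubgroup_init a (i + 1) hi']
end

section
/- Let G be a finite group, let i be a positive integer, and let A < B be subgroups of G such that A is a maximal subgroup of every subgroup K of G with A ≤ K and K ∈ Orb(B). Then λ_i(A, B) = ν(A, B) · |D_i ∩ (B \ A)|, where ν(A, B) is the number of subgroups K of G with A ≤ K and K ∈ Orb(B). -/
/-- `λ_i(A, B)`: the number of `x ∈ G` of order `i` with `⟨A, x⟩` in the
`Aut G`-orbit of `B`. -/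
noncomputable def lambdaConstOrd {G : Type*} [Group G] (i : ℕ) (A B : Subgroup G) : ℕ :=
  Nat.card {x : G // orderOf x = i ∧ inAutOrbit (A ⊔ Subgroup.closure {x}) B}

/-- `ν(A, B)`: the number of subgroups `K` containing `A` that lie in the
`Aut G`-orbit of `B`. -/
noncomputable def nuConst {G : Type*} [Group G] (A B : Subgroup G) : ℕ :=
  Nat.card {K : Subgroup G // A ≤ K ∧ inAutOrbit K B}

/-- `A` is a maximal subgroup of `K`: `A < K` and no subgroup lies strictly between. -/
def IsMaximalIn {G : Type*} [Group G] (A K : Subgroup G) : Prop :=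
  A < K ∧ ∀ L : Subgroup G, A < L → L < K → False

section Aux

variable {G : Type*} [Group G] [Fintype G]

/-- Cardinality of elements of order `i` in `S` but not in `A ≤ S`. -/
lemma aux_count (A S : Subgroup G) (i : ℕ) (hAS : A ≤ S) :
    Nat.card {x : G // orderOf x = i ∧ x ∈ S ∧ x ∉ A} =
      Nat.card {x : G // orderOf x = i ∧ x ∈ S} -
        Nat.card {x : G // orderOf x = i ∧ x ∈ A} := by
  classical
  simp only [Nat.card_eq_fintype_card, Fintype.card_subtype]
  rw [show (Finset.univ.filter fun x : G => orderOf x = i ∧ x ∈ S ∧ x ∉ A) =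
      (Finset.univ.filter fun x : G => orderOf x = i ∧ x ∈ S) \
        (Finset.univ.filter fun x : G => orderOf x = i ∧ x ∈ A) by
    ext x; simp only [Finset.mem_filter, Finset.mem_sdiff, Finset.mem_univ, true_and]
    constructor
    · rintro ⟨h1, h2, h3⟩; exact ⟨⟨h1, h2⟩, fun h => h3 h.2⟩
    · rintro ⟨⟨h1, h2⟩, h3⟩; exact ⟨h1, h2, fun h => h3 ⟨h1, h⟩⟩]
  rw [Finset.card_sdiff_of_subset]
  intro x hx
  simp only [Finset.mem_filter, Finset.mem_univ, true_and] at hx ⊢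
  exact ⟨hx.1, hAS hx.2⟩

omit [Fintype G] in
lemma aux_orbit_count (B K : Subgroup G) (i : ℕ) (h : inAutOrbit K B) :
    Nat.card {x : G // orderOf x = i ∧ x ∈ K} =
      Nat.card {x : G // orderOf x = i ∧ x ∈ B} := by
  obtain ⟨φ, hφ⟩ := h
  subst hφ
  have hord : ∀ y : G, orderOf (φ.symm y) = orderOf y := fun y =>
    orderOf_injective φ.symm.toMonoidHom φ.symm.injective y
  have hmem : ∀ y : G, y ∈ Subgroup.map φ.toMonoidHom B ↔ φ.symm y ∈ B := fun y =>
    Subgroup.mem_map_equiv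
  refine Nat.card_congr (Equiv.subtypeEquiv φ.symm.toEquiv fun x => ?_)
  show orderOf x = i ∧ x ∈ Subgroup.map φ.toMonoidHom B ↔ orderOf (φ.symm x) = i ∧ φ.symm x ∈ B
  rw [hord x, hmem x]

end Aux

/-- If `A < B` and `A` is maximal in every subgroup `K ⊇ A` in the `Aut G`-orbit of `B`,
then `λ_i(A, B) = ν(A, B) · |D_i ∩ (B \ A)|`. -/
theorem lambdaConstOrd_eq_nu_mul {G : Type*} [Group G] [Fintype G]
    (A B : Subgroup G) (i : ℕ) (hi : 0 < i) (hAB : A < B)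
    (hmax : ∀ K : Subgroup G, A ≤ K → inAutOrbit K B → IsMaximalIn A K) :
    lambdaConstOrd i A B =
      nuConst A B * Nat.card {x : G // orderOf x = i ∧ x ∈ B ∧ x ∉ A} := by
  classical
  have key : ∀ K : Subgroup G, A ≤ K → inAutOrbit K B → ∀ x : G, x ∈ K → x ∉ A →
      A ⊔ Subgroup.closure {x} = K := by
    intro K hAK hK x hxK hxA
    have hmaxK := hmax K hAK hK
    have hx : x ∈ A ⊔ Subgroup.closure {x} :=
      SetLike.le_def.mp le_sup_right (Subgroup.subset_closure (Set.mem_singleton x))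
    have h1 : A < A ⊔ Subgroup.closure {x} :=
      lt_of_le_of_ne le_sup_left (fun h => hxA (h ▸ hx))
    have h2 : A ⊔ Subgroup.closure {x} ≤ K :=
      sup_le hAK ((Subgroup.closure_le _).2 (by simpa using hxK))
    rcases lt_or_eq_of_le h2 with h | h
    · exact absurd h (fun h => hmaxK.2 _ h1 h)
    · exact h
  have notmemA : ∀ x : G, inAutOrbit (A ⊔ Subgroup.closure {x}) B → x ∉ A := by
    intro x hx hxA
    have h : A ⊔ Subgroup.closure {x} = A :=
      sup_eq_left.mpr ((Subgroup.closure_le _).2 (by simpa using hxA))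
    rw [h] at hx
    exact lt_irrefl A (hmax A le_rfl hx).1
  have e : {x : G // orderOf x = i ∧ inAutOrbit (A ⊔ Subgroup.closure {x}) B} ≃
      Σ K : {K : Subgroup G // A ≤ K ∧ inAutOrbit K B},
        {x : G // orderOf x = i ∧ x ∈ K.1 ∧ x ∉ A} :=
    { toFun := fun x => ⟨⟨A ⊔ Subgroup.closure {x.1}, le_sup_left, x.2.2⟩,
        ⟨x.1, x.2.1,
          SetLike.le_def.mp le_sup_right (Subgroup.subset_closure (Set.mem_singleton x.1)),
          notmemA x.1 x.2.2⟩⟩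
      invFun := fun p => ⟨p.2.1, p.2.2.1, by
        rw [key p.1.1 p.1.2.1 p.1.2.2 p.2.1 p.2.2.2.1 p.2.2.2.2]; exact p.1.2.2⟩
      left_inv := fun x => rfl
      right_inv := by
        rintro ⟨⟨K, hK⟩, ⟨x, hx⟩⟩
        have h : A ⊔ Subgroup.closure {x} = K := key K hK.1 hK.2 x hx.2.1 hx.2.2
        subst h
        rfl }
  rw [lambdaConstOrd, Nat.card_congr e, nuConst]
  have hconst : ∀ K : {K : Subgroup G // A ≤ K ∧ inAutOrbit K B},
      Nat.card {x : G // orderOf x = i ∧ x ∈ K.1 ∧ x ∉ A} =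
        Nat.card {x : G // orderOf x = i ∧ x ∈ B ∧ x ∉ A} := by
    intro K
    rw [aux_count A K.1 i K.2.1, aux_count A B i hAB.le, aux_orbit_count B K.1 i K.2.2]
  haveI : Fintype {K : Subgroup G // A ≤ K ∧ inAutOrbit K B} := Fintype.ofFinite _
  haveI : ∀ K : {K : Subgroup G // A ≤ K ∧ inAutOrbit K B},
      Fintype {x : G // orderOf x = i ∧ x ∈ K.1 ∧ x ∉ A} := fun K => Fintype.ofFinite _
  rw [Nat.card_eq_fintype_card, Fintype.card_sigma]
  have h2 : ∀ K : {K : Subgroup G // A ≤ K ∧ inAutOrbit K B},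
      Fintype.card {x : G // orderOf x = i ∧ x ∈ K.1 ∧ x ∉ A} =
        Nat.card {x : G // orderOf x = i ∧ x ∈ B ∧ x ∉ A} := by
    intro K
    rw [← Nat.card_eq_fintype_card]
    exact hconst K
  simp only [h2]
  rw [Finset.sum_const, Finset.card_univ, smul_eq_mul, Nat.card_eq_fintype_card,
    Nat.card_eq_fintype_card]
end
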